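/- arXiv:1805.07953 — 2 statements merged into one kernel-verified Lean document; each statement's English description precedes it below -/
import Mathlib

section
/- Let $R$ be a Kostant root system and let $\nu \in R$ be primitive, i.e., $k\nu \in R$ for $k \in \mathbb{Z}$ implies $|k| \geq 1$. Then there exists a base $S$ of $R$ with $\nu \in S$. -/
variable {V : Type*} [AddCommGroup V] [Module ℝ V]

def IsRootSystem (Δ : Set V) : Prop :=
  Δ.Finite ∧ (0 : V) ∉ Δ ∧ (∀ α ∈ Δ, -α ∈ Δ) ∧
    ∀ α ∈ Δ, ∃ f : V →ₗ[ℝ] ℝ, f α = 2 ∧ (∀ β ∈ Δ, ∃ n : ℤ, f β = (n : ℝ)) ∧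
      ∀ β ∈ Δ, β - f β • α ∈ Δ

def IsBase {W : Type*} [AddCommGroup W] [Module ℝ W] (Δ S : Set W) : Prop :=
  S ⊆ Δ ∧ LinearIndependent ℝ ((↑) : S → W) ∧
    ∀ β ∈ Δ, ∃ c : W →₀ ℤ, ↑c.support ⊆ S ∧
      β = c.sum (fun v n => (n : ℝ) • v) ∧ ((∀ v, 0 ≤ c v) ∨ (∀ v, c v ≤ 0))

/-!
Write `π` for the quotient map and `R = π(Δ) \ {0}`. Since `R` has a base (the image of
`Sg₀ \ I`), an element of `R` on the line `ℝ ν` is a rational multiple of `ν`, so by primitivity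
it is `t • ν` with `t < 0` or `t ≥ 1`. Hence there is a functional `φ` with `φ ν = 1` whose value
at any other element of `R` is negative or larger than `1`. Perturb `φ ∘ π` to a functional `F`
which vanishes at no root; the `F`-positive indecomposable roots form a base `Sg` of `Δ`, on which
`φ ∘ π ≥ 0`. Consequently the roots in `ker π` are combinations of elements of `Sg ∩ ker π`, and
the images of the remaining elements of `Sg` form a base of `R`. Finally `ν = π b` with `F b > 0`;
writing `b` as a sum of elements of `Sg`, whose `φ`-values are `0` or larger than `1` unless they
map to `ν`, one of them must map to `ν`.
-/

lemma IsAddIndecomposable.baseOf_comp {ι M M' S : Type*} [AddMonoid M] [AddMonoid M']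
    [LinearOrder S] [AddMonoid S] {g : M →+ M'} (hg : Function.Injective g) (v : ι → M)
    (f : M' →+ S) :
    IsAddIndecomposable.baseOf (g ∘ v) f = IsAddIndecomposable.baseOf v (f.comp g) := by
  ext i
  simp [IsAddIndecomposable.baseOf, IsAddIndecomposable, ← map_add, hg.eq_iff,
    map_eq_zero_iff g hg]

namespace IsRootSystem

open Submodule Module

variable {Δ : Set V} (hΔ : IsRootSystem Δ)

noncomputable def coroot (a : Δ) : V →ₗ[ℝ] ℝ := (hΔ.2.2.2 a a.2).choose

lemma coroot_apply_self (a : Δ) : hΔ.coroot a a = 2 := (hΔ.2.2.2 a a.2).choose_spec.1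

lemma exists_int_coroot_apply (a b : Δ) : ∃ n : ℤ, hΔ.coroot a b = n :=
  (hΔ.2.2.2 a a.2).choose_spec.2.1 b b.2

lemma sub_coroot_smul_mem (a b : Δ) : (b : V) - hΔ.coroot a b • (a : V) ∈ Δ :=
  (hΔ.2.2.2 a a.2).choose_spec.2.2 b b.2

def rootIn (a : Δ) : span ℝ Δ := ⟨a, subset_span a.2⟩

lemma rootIn_injective : Function.Injective (rootIn (Δ := Δ)) := fun _ _ h =>
  Subtype.ext (congrArg Subtype.val h :)

lemma range_rootIn : Set.range (rootIn (Δ := Δ)) = (↑) ⁻¹' Δ := by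
  ext x
  exact ⟨by rintro ⟨a, rfl⟩; exact a.2, fun hx => ⟨⟨x, hx⟩, rfl⟩⟩

lemma mapsTo_preReflection (a : Δ) :
    Set.MapsTo (preReflection (rootIn a) ((hΔ.coroot a).domRestrict _))
      (Set.range rootIn) (Set.range rootIn) := by
  rintro - ⟨b, rfl⟩
  exact ⟨⟨_, hΔ.sub_coroot_smul_mem a b⟩, rfl⟩

lemma corootIn_injective :
    Function.Injective fun a : Δ => (hΔ.coroot a).domRestrict (span ℝ Δ) := by
  intro a b h
  have h' : ∀ c : Δ, hΔ.coroot a c = hΔ.coroot b c := fun c => LinearMap.congr_fun h (rootIn c)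
  have := IsAddTorsionFree.of_isTorsionFree ℝ (span ℝ Δ)
  apply rootIn_injective
  refine eq_of_mapsTo_reflection_of_mem (@Set.finite_range _ _ _ hΔ.1)
    (f := (hΔ.coroot a).domRestrict _) (g := (hΔ.coroot b).domRestrict _)
    (hΔ.coroot_apply_self a) (hΔ.coroot_apply_self b) ?_ ?_
    (hΔ.mapsTo_preReflection a) (hΔ.mapsTo_preReflection b) (Set.mem_range_self b)
  · simpa [rootIn, h'] using hΔ.coroot_apply_self a
  · simpa [rootIn, ← h'] using hΔ.coroot_apply_self b

/-- A root pairing needs a perfect pairing, so the roots are viewed in their (finite-dimensional)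
span. -/
noncomputable def toRootPairing : RootPairing Δ ℝ (span ℝ Δ) (Dual ℝ (span ℝ Δ)) :=
  haveI : FiniteDimensional ℝ (span ℝ Δ) := FiniteDimensional.span_of_finite ℝ hΔ.1
  haveI : Finite Δ := hΔ.1
  .mk'' (Dual.eval ℝ _) ⟨rootIn, rootIn_injective⟩ ⟨_, hΔ.corootIn_injective⟩
    hΔ.coroot_apply_self hΔ.mapsTo_preReflection
    (by rw [Function.Embedding.coeFn_mk, range_rootIn]; exact span_span_coe_preimage)

instance isCrystallographic_toRootPairing : hΔ.toRootPairing.IsCrystallographic where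
  exists_value a b := by
    obtain ⟨n, hn⟩ := hΔ.exists_int_coroot_apply b a
    exact ⟨n, hn.symm⟩

include hΔ in
lemma linearIndepOn_baseOf (F : V →ₗ[ℝ] ℝ) (hF : ∀ a ∈ Δ, F a ≠ 0) :
    LinearIndepOn ℝ id (((↑) : Δ → V) '' IsAddIndecomposable.baseOf (↑) (F : V →+ ℝ)) := by
  have : Finite Δ := hΔ.1
  have hli := RootPairing.linearIndepOn_root_baseOf' hΔ.toRootPairing (S := ℝ)
    (F.domRestrict _) (fun a => hF a a.2)
  have hv : (span ℝ Δ).subtype ∘ hΔ.toRootPairing.root = (↑) := rfl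
  have hB : IsAddIndecomposable.baseOf ((↑) : Δ → V) (F : V →+ ℝ) =
      IsAddIndecomposable.baseOf hΔ.toRootPairing.root (F.domRestrict (span ℝ Δ) : _ →+ ℝ) :=
    IsAddIndecomposable.baseOf_comp (g := (span ℝ Δ).subtype.toAddMonoidHom)
      (subtype_injective _) hΔ.toRootPairing.root (F : V →+ ℝ)
  rw [hB, ← hv]
  exact LinearIndepOn.id_image (hli.map' _ (ker_subtype _))

include hΔ in
lemma exists_positive_base (F : V →ₗ[ℝ] ℝ) (hF : ∀ a ∈ Δ, F a ≠ 0) :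
    ∃ Sg ⊆ Δ, LinearIndepOn ℝ id Sg ∧ (∀ s ∈ Sg, 0 < F s) ∧
      ∀ b ∈ Δ, 0 < F b → b ∈ AddSubmonoid.closure Sg := by
  have : Finite Δ := hΔ.1
  refine ⟨_, ?_, hΔ.linearIndepOn_baseOf F hF, ?_, fun b hb hFb => ?_⟩
  · rintro _ ⟨a, -, rfl⟩
    exact a.2
  · rintro _ ⟨a, ha, rfl⟩
    exact IsAddIndecomposable.baseOf_subset_pos _ _ ha
  · rw [AddSubmonoid.closure_image_isAddIndecomposable_baseOf]
    exact AddSubmonoid.subset_closure ⟨⟨b, hb⟩, hFb, rfl⟩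

end IsRootSystem

section

open Filter Topology Submodule

variable {W : Type*} [AddCommGroup W] [Module ℝ W]

lemma exists_dual_ne_zero_respecting_sign {Δ : Set V} (hfin : Δ.Finite) (h0 : (0 : V) ∉ Δ)
    (g : V →ₗ[ℝ] ℝ) : ∃ F : V →ₗ[ℝ] ℝ,
      ∀ a ∈ Δ, F a ≠ 0 ∧ (0 < g a → 0 < F a) ∧ (g a < 0 → F a < 0) := by
  have : Finite Δ := hfin
  obtain ⟨ψ, hψ⟩ := Module.exists_dual_forall_apply_ne_zero (K := ℝ) (fun a : Δ => (a : V))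
    (fun a => ne_of_mem_of_not_mem a.2 h0)
  have key : ∀ a ∈ Δ, ∀ᶠ ε in 𝓝[>] (0 : ℝ),
      g a + ε * ψ a ≠ 0 ∧ (0 < g a → 0 < g a + ε * ψ a) ∧ (g a < 0 → g a + ε * ψ a < 0) := by
    intro a ha
    have hlim : Tendsto (fun ε : ℝ => g a + ε * ψ a) (𝓝[>] 0) (𝓝 (g a)) :=
      ((continuous_const.add (continuous_id.mul continuous_const)).tendsto' 0 (g a)
        (by simp)).mono_left nhdsWithin_le_nhds
    rcases lt_trichotomy (g a) 0 with hga | hga | hga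
    · filter_upwards [hlim.eventually (gt_mem_nhds hga)] with ε hε
      exact ⟨hε.ne, fun h => (lt_asymm hga h).elim, fun _ => hε⟩
    · filter_upwards [self_mem_nhdsWithin] with ε (hε : 0 < ε)
      simp [hga, hε.ne', hψ ⟨a, ha⟩]
    · filter_upwards [hlim.eventually (lt_mem_nhds hga)] with ε hε
      exact ⟨hε.ne', fun _ => hε, fun h => (lt_asymm hga h).elim⟩
  obtain ⟨ε, hε⟩ := (hfin.eventually_all.2 key).exists
  exact ⟨g + ε • ψ, fun a ha => by simpa [mul_comm] using hε a ha⟩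

lemma IsRootSystem.exists_base_nonneg {Δ : Set V} (hΔ : IsRootSystem Δ) (g : V →ₗ[ℝ] ℝ) :
    ∃ Sg ⊆ Δ, LinearIndepOn ℝ id Sg ∧ (∀ s ∈ Sg, 0 ≤ g s) ∧
      ∀ b ∈ Δ, (b ∈ AddSubmonoid.closure Sg ∨ -b ∈ AddSubmonoid.closure Sg) ∧
        (0 < g b → b ∈ AddSubmonoid.closure Sg) := by
  obtain ⟨F, hF⟩ := exists_dual_ne_zero_respecting_sign hΔ.1 hΔ.2.1 g
  obtain ⟨Sg, hSgΔ, hli, hpos, hcl⟩ := hΔ.exists_positive_base F fun a ha => (hF a ha).1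
  refine ⟨Sg, hSgΔ, hli, fun s hs => not_lt.1 fun h => ?_,
    fun b hb => ⟨?_, fun h => hcl b hb ((hF b hb).2.1 h)⟩⟩
  · exact lt_asymm (hpos s hs) ((hF s (hSgΔ hs)).2.2 h)
  refine (hF b hb).1.lt_or_gt.symm.imp (hcl b hb) fun h => hcl _ (hΔ.2.2.1 b hb) ?_
  rwa [map_neg, neg_pos]

lemma mem_closure_iff_exists_int {S : Set W} {β : W} :
    β ∈ AddSubmonoid.closure S ↔ ∃ c : W →₀ ℤ, ↑c.support ⊆ S ∧
      β = c.sum (fun v n => (n : ℝ) • v) ∧ ∀ v, 0 ≤ c v := by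
  rw [← span_nat_eq_addSubmonoidClosure, mem_toAddSubmonoid, mem_span_set]
  constructor
  · rintro ⟨c, hcS, rfl⟩
    refine ⟨c.mapRange (↑) Nat.cast_zero, ?_, ?_, fun v => by simp⟩
    · rwa [Finsupp.support_mapRange_of_injective _ _ Nat.cast_injective]
    · rw [Finsupp.sum_mapRange_index (by simp)]
      simp [Nat.cast_smul_eq_nsmul]
  · rintro ⟨c, hcS, rfl, hc⟩
    refine ⟨c.mapRange Int.toNat rfl, ?_, ?_⟩
    · exact (Finset.coe_subset.2 Finsupp.support_mapRange).trans hcS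
    · rw [Finsupp.sum_mapRange_index (by simp)]
      refine Finsupp.sum_congr fun v _ => ?_
      rw [← Nat.cast_smul_eq_nsmul ℝ, ← Int.cast_natCast, Int.toNat_of_nonneg (hc v)]

lemma neg_mem_closure_iff_exists_int {S : Set W} {β : W} :
    -β ∈ AddSubmonoid.closure S ↔ ∃ c : W →₀ ℤ, ↑c.support ⊆ S ∧
      β = c.sum (fun v n => (n : ℝ) • v) ∧ ∀ v, c v ≤ 0 := by
  rw [mem_closure_iff_exists_int]
  constructor
  · rintro ⟨c, hcS, hc, hc0⟩
    refine ⟨-c, by rwa [Finsupp.support_neg], ?_, fun v => by simpa using hc0 v⟩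
    rw [Finsupp.sum_neg_index (by simp), ← neg_neg β, hc]
    simp [Finsupp.sum, ← Finset.sum_neg_distrib]
  · rintro ⟨c, hcS, hc, hc0⟩
    refine ⟨-c, by rwa [Finsupp.support_neg], ?_, fun v => by simpa using hc0 v⟩
    rw [Finsupp.sum_neg_index (by simp), hc]
    simp [Finsupp.sum, ← Finset.sum_neg_distrib]

lemma isBase_iff {R S : Set W} : IsBase R S ↔ S ⊆ R ∧ LinearIndepOn ℝ id S ∧
    ∀ β ∈ R, β ∈ AddSubmonoid.closure S ∨ -β ∈ AddSubmonoid.closure S := by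
  refine and_congr .rfl (and_congr .rfl (forall₂_congr fun β _ => ?_))
  rw [mem_closure_iff_exists_int, neg_mem_closure_iff_exists_int, ← exists_or]
  exact exists_congr fun c => by tauto

lemma isBase_image {Δ Sg : Set V} (π : V →ₗ[ℝ] W) (hSgΔ : Sg ⊆ Δ) (hli : LinearIndepOn ℝ id Sg)
    (hcl : ∀ b ∈ Δ, b ∈ AddSubmonoid.closure Sg ∨ -b ∈ AddSubmonoid.closure Sg)
    (hker : LinearMap.ker π ≤ span ℝ {s ∈ Sg | π s = 0}) :
    IsBase (π '' Δ \ {0}) (π '' {s ∈ Sg | π s ≠ 0}) := by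
  refine isBase_iff.2 ⟨?_, ?_, ?_⟩
  · rintro _ ⟨s, ⟨hs, hs0⟩, rfl⟩
    exact ⟨⟨s, hSgΔ hs, rfl⟩, hs0⟩
  · have hSg : {s ∈ Sg | π s ≠ 0} ∪ {s ∈ Sg | π s = 0} = Sg := by
      ext s
      simp only [Set.mem_union, Set.mem_ofPred_eq]
      tauto
    have hdisj : Disjoint {s ∈ Sg | π s ≠ 0} {s ∈ Sg | π s = 0} :=
      Set.disjoint_left.2 fun _ h₁ h₂ => h₁.2 h₂.2
    rw [← hSg, linearIndepOn_id_union_iff hdisj] at hli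
    exact hli.1.image (hli.2.2.mono_right hker)
  · have hmap : AddSubmonoid.closure Sg ≤
        (AddSubmonoid.closure (π '' {s ∈ Sg | π s ≠ 0})).comap π.toAddMonoidHom := by
      refine AddSubmonoid.closure_le.2 fun s hs => ?_
      by_cases hs0 : π s = 0
      · simp [hs0]
      · exact AddSubmonoid.subset_closure ⟨s, ⟨hs, hs0⟩, rfl⟩
    rintro _ ⟨⟨b, hb, rfl⟩, -⟩
    refine (hcl b hb).imp (fun h => hmap h) (fun h => ?_)
    simpa using hmap h

lemma IsBase.exists_rat_eq_of_smul_mem {R S : Set W} (hS : IsBase R S) {ν : W} (hν : ν ∈ R)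
    (hν0 : ν ≠ 0) {t : ℝ} (ht : t • ν ∈ R) : ∃ q : ℚ, (q : ℝ) = t := by
  obtain ⟨c, hcS, hcν, -⟩ := hS.2.2 ν hν
  obtain ⟨d, hdS, hdν, -⟩ := hS.2.2 _ ht
  have hcast (e : W →₀ ℤ) : Finsupp.linearCombination ℝ id (e.mapRange (↑) Int.cast_zero) =
      e.sum (fun v n => (n : ℝ) • v) := by
    rw [Finsupp.linearCombination_apply, Finsupp.sum_mapRange_index (by simp)]
    rfl
  have hsupp (e : W →₀ ℤ) (he : ↑e.support ⊆ S) :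
      e.mapRange ((↑) : ℤ → ℝ) Int.cast_zero ∈ Finsupp.supported ℝ ℝ S :=
    (Finsupp.mem_supported _ _).2 ((Finset.coe_subset.2 Finsupp.support_mapRange).trans he)
  set l : W →₀ ℝ := d.mapRange (↑) Int.cast_zero - t • c.mapRange (↑) Int.cast_zero
  have hli : LinearIndepOn ℝ id S := hS.2.1
  have hl : l = 0 := by
    refine linearIndepOn_iff.1 hli l ?_ ?_
    · exact sub_mem (hsupp d hdS) (Submodule.smul_mem _ t (hsupp c hcS))
    · simp [l, hcast, ← hcν, ← hdν]
  obtain ⟨v, hv⟩ : ∃ v, c v ≠ 0 := by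
    by_contra! h
    exact hν0 (by simp [hcν, show c = 0 from Finsupp.ext h])
  have hlv := DFunLike.congr_fun hl v
  simp only [l, Finsupp.coe_sub, Finsupp.coe_smul, Pi.sub_apply, Pi.smul_apply,
    Finsupp.mapRange_apply, smul_eq_mul, Finsupp.coe_zero, Pi.zero_apply] at hlv
  refine ⟨d v / c v, ?_⟩
  push_cast
  field_simp
  linarith

lemma eventually_one_lt_abs_mul_add {z : ℝ} (hz : z ≠ 0) (x : ℝ) :
    ∀ᶠ c in atTop, 1 < |c * z + x| := by
  filter_upwards [eventually_gt_atTop ((1 + |x|) / |z|)] with c hc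
  have hc' : 1 + |x| < c * |z| := (div_lt_iff₀ (abs_pos.2 hz)).1 hc
  have hc0 : 0 ≤ c := by
    by_contra! h
    nlinarith [abs_nonneg x, abs_nonneg z]
  have := abs_add_le (c * z + x) (-x)
  rw [add_neg_cancel_right, abs_neg, abs_mul, abs_of_nonneg hc0] at this
  linarith

lemma exists_dual_eq_one_of_primitive {R : Set W} (hR : R.Finite) (h0 : (0 : W) ∉ R) {ν : W}
    (hν : ν ∈ R) (hprim : ∀ t : ℝ, 0 < t → t • ν ∈ R → 1 ≤ t) :
    ∃ φ : W →ₗ[ℝ] ℝ, φ ν = 1 ∧ ∀ μ ∈ R, μ ≠ ν → φ μ < 0 ∨ 1 < φ μ := by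
  set q := (span ℝ {ν}).mkQ
  have hqν : q ν = 0 := (Submodule.Quotient.mk_eq_zero _).2 (mem_span_singleton_self ν)
  have : Finite {μ ∈ R | q μ ≠ 0} := (hR.sep _).to_subtype
  obtain ⟨ζ, hζ⟩ := Module.exists_dual_forall_apply_ne_zero (K := ℝ)
    (fun μ : {μ ∈ R | q μ ≠ 0} => q μ) (fun μ => μ.2.2)
  obtain ⟨ξ, hξ⟩ := Module.Projective.exists_dual_eq_one ℝ (ne_of_mem_of_not_mem hν h0)
  -- Off the line `ℝ ν`, `c • ζ ∘ q` dominates `ξ` on `R` for large `c`; on it, `φ (t • ν) = t`.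
  obtain ⟨c, hc⟩ := (((hR.sep _).eventually_all
    (p := fun μ c => 1 < |c * ζ (q μ) + ξ μ|)).2 fun μ hμ =>
      eventually_one_lt_abs_mul_add (hζ ⟨μ, hμ⟩) (ξ μ)).exists
  refine ⟨c • ζ ∘ₗ q + ξ, by simp [hqν, hξ], fun μ hμ hμν => ?_⟩
  by_cases hqμ : q μ = 0
  · obtain ⟨t, rfl⟩ := mem_span_singleton.1 ((Submodule.Quotient.mk_eq_zero _).1 hqμ)
    have ht0 : t ≠ 0 := by rintro rfl; exact h0 (by simpa using hμ)
    have ht1 : t ≠ 1 := by rintro rfl; exact hμν (one_smul _ _)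
    rw [show (c • ζ ∘ₗ q + ξ) (t • ν) = t by simp [hqν, hξ]]
    rcases ht0.lt_or_gt with ht | ht
    · exact .inl ht
    · exact .inr ((hprim t ht hμ).lt_of_ne' ht1)
  · have := hc μ ⟨hμ, hqμ⟩
    simp only [LinearMap.add_apply, LinearMap.smul_apply, LinearMap.comp_apply, smul_eq_mul]
    rcases lt_abs.1 this with h | h
    · exact .inr h
    · exact .inl (by linarith)

lemma apply_eq_zero_or_one_lt_of_mem_closure {S : Set V} (g : V →ₗ[ℝ] ℝ)
    (hS : ∀ s ∈ S, g s = 0 ∨ 1 < g s) {x : V} (hx : x ∈ AddSubmonoid.closure S) :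
    g x = 0 ∨ 1 < g x := by
  induction hx using AddSubmonoid.closure_induction with
  | mem s hs => exact hS s hs
  | zero => simp
  | add x y _ _ hx hy =>
    rw [map_add]
    rcases hx with hx | hx <;> rcases hy with hy | hy
    · exact .inl (by linarith)
    all_goals exact .inr (by linarith)

lemma mem_closure_of_apply_eq_zero {S : Set V} (g : V →ₗ[ℝ] ℝ) (hS : ∀ s ∈ S, 0 ≤ g s) {x : V}
    (hx : x ∈ AddSubmonoid.closure S) (hgx : g x = 0) :
    x ∈ AddSubmonoid.closure {s ∈ S | g s = 0} := by
  suffices ∀ y ∈ AddSubmonoid.closure S,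
      0 ≤ g y ∧ (g y = 0 → y ∈ AddSubmonoid.closure {s ∈ S | g s = 0}) from (this x hx).2 hgx
  intro y hy
  induction hy using AddSubmonoid.closure_induction with
  | mem s hs => exact ⟨hS s hs, fun h => AddSubmonoid.subset_closure ⟨hs, h⟩⟩
  | zero => simp
  | add x y _ _ hx hy =>
    rw [map_add]
    refine ⟨add_nonneg hx.1 hy.1, fun h => add_mem (hx.2 ?_) (hy.2 ?_)⟩ <;> linarith [hx.1, hy.1]

lemma exists_isBase_mem_of_dual {Δ I : Set V} (hΔ : IsRootSystem Δ) (hIΔ : I ⊆ Δ)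
    (π : V →ₗ[ℝ] W) (hker : LinearMap.ker π = span ℝ I) (φ : W →ₗ[ℝ] ℝ) {ν : W}
    (hν : ν ∈ π '' Δ) (hφν : φ ν = 1) (hφ : ∀ μ ∈ π '' Δ \ {0}, μ ≠ ν → φ μ < 0 ∨ 1 < φ μ) :
    ∃ S, IsBase (π '' Δ \ {0}) S ∧ ν ∈ S := by
  obtain ⟨Sg, hSgΔ, hli, hSg_nonneg, hcl⟩ := hΔ.exists_base_nonneg (φ ∘ₗ π)
  have hφ_zero : ∀ b ∈ Δ, φ (π b) = 0 → π b = 0 := by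
    intro b hb hφb
    by_contra hb0
    rcases eq_or_ne (π b) ν with hbν | hbν
    · rw [hbν, hφν] at hφb
      exact one_ne_zero hφb
    · rcases hφ _ ⟨⟨b, hb, rfl⟩, hb0⟩ hbν with h | h <;> linarith
  have hker' : LinearMap.ker π ≤ span ℝ {s ∈ Sg | π s = 0} := by
    rw [hker, span_le]
    intro i hi
    have hπi : π i = 0 := hker.ge (subset_span hi)
    suffices ∀ j ∈ AddSubmonoid.closure Sg, π j = 0 → j ∈ span ℝ {s ∈ Sg | π s = 0} by
      rcases (hcl i (hIΔ hi)).1 with h | h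
      · exact this i h hπi
      · simpa using this _ h (by simp [hπi])
    intro j hj hπj
    have := mem_closure_of_apply_eq_zero (φ ∘ₗ π) hSg_nonneg hj (by simp [hπj])
    refine closure_subset_span (AddSubmonoid.closure_mono (fun s hs => ?_) this)
    exact ⟨hs.1, hφ_zero s (hSgΔ hs.1) hs.2⟩
  refine ⟨_, isBase_image π hSgΔ hli (fun b hb => (hcl b hb).1) hker', ?_⟩
  obtain ⟨b, hb, rfl⟩ := hν
  by_contra hνS
  have hSg : ∀ s ∈ Sg, φ (π s) = 0 ∨ 1 < φ (π s) := by
    intro s hs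
    by_cases hs0 : π s = 0
    · simp [hs0]
    · have hsν : π s ≠ π b := fun h => hνS ⟨s, ⟨hs, hs0⟩, h⟩
      exact .inr <| (hφ _ ⟨⟨s, hSgΔ hs, rfl⟩, hs0⟩ hsν).resolve_left (not_lt.2 (hSg_nonneg s hs))
  have := apply_eq_zero_or_one_lt_of_mem_closure (φ ∘ₗ π) hSg
    ((hcl b hb).2 (by simp [hφν]))
  simp [hφν] at this

end

/-- if `ν` is a primitive element of a Kostant root system
`R = π(Δ) \ {0}` (no rational multiple `t • ν` with `0 < |t| < 1` lies in `R`),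
then there is a base of `R` containing `ν`. -/
theorem stmt7 (Δ Sg₀ I : Set V) (hΔ : IsRootSystem Δ)
    (h₀ : IsBase Δ Sg₀) (hI : I ⊆ Sg₀)
    (ν : V ⧸ Submodule.span ℝ I)
    (hν : ν ∈ ((Submodule.span ℝ I).mkQ '' Δ) \ {0})
    (hprim : ∀ t : ℚ, (t : ℝ) • ν ∈ ((Submodule.span ℝ I).mkQ '' Δ) \ {0} → 1 ≤ |t|) :
    ∃ S : Set (V ⧸ Submodule.span ℝ I),
      IsBase (((Submodule.span ℝ I).mkQ '' Δ) \ {0}) S ∧ ν ∈ S := by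
  set π := (Submodule.span ℝ I).mkQ
  obtain ⟨hSg₀Δ, hli₀, hcl₀⟩ := isBase_iff.1 h₀
  have hS₀ := isBase_image π hSg₀Δ hli₀ hcl₀ <| by
    rw [Submodule.ker_mkQ]
    exact Submodule.span_mono fun i hi =>
      ⟨hI hi, (Submodule.Quotient.mk_eq_zero _).2 (Submodule.subset_span hi)⟩
  have hprim' : ∀ t : ℝ, 0 < t → t • ν ∈ π '' Δ \ {0} → 1 ≤ t := by
    intro t ht htν
    obtain ⟨q, rfl⟩ := hS₀.exists_rat_eq_of_smul_mem hν hν.2 htν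
    have := hprim q htν
    rw [abs_of_pos (by exact_mod_cast ht)] at this
    exact_mod_cast this
  obtain ⟨φ, hφν, hφ⟩ :=
    exists_dual_eq_one_of_primitive ((hΔ.1.image π).sdiff) (by simp) hν hprim'
  exact exists_isBase_mem_of_dual hΔ (hI.trans hSg₀Δ) π (Submodule.ker_mkQ _) φ hν.1 hφν hφ
end

section
/- Let $\Delta$ be a root system of a semisimple Lie algebra with base $\Sigma$, let $\alpha \in \Sigma$, and let $s$ be a positive integer. Then the set $\Delta[\alpha,s]$ of roots whose coefficient of $\alpha$ (in the $\Sigma$-expansion) is divisible by $s$ is itself a root system, and if $I \subset \Sigma$ with $\alpha \notin I$, then every root of $\Delta$ lying in the span of $I$ belongs to $\Delta[\alpha,s]$. -/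
variable {V : Type*} [AddCommGroup V] [Module ℝ V]

/-- `Δ[α,s]`: roots whose coefficient of `α` in the expansion over the base `Sg`
is divisible by `s`. -/
def rootSub (Δ Sg : Set V) (α : V) (s : ℤ) : Set V :=
  {β ∈ Δ | ∀ c : V →₀ ℤ,
    (↑c.support ⊆ Sg ∧ β = c.sum (fun v n => (n : ℝ) • v)) → s ∣ c α}

/-!
Since the base is linearly independent, the coefficients of a root are unique, so the
`α`-coefficient is additive on roots. The root-system axioms for `Δ[α,s]` only produce
integer combinations `γ - n • β` of its members (with `-β = β - 2 • β`), whose `α`-coefficient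
is again divisible by `s`; a root in the span of `I` has `α`-coefficient `0`.
-/

open Finsupp

lemma sum_intCast_smul_eq_linearCombination (c : V →₀ ℤ) :
    c.sum (fun v n => (n : ℝ) • v) = linearCombination ℝ id (c.mapRange (↑) Int.cast_zero) := by
  rw [linearCombination_apply, sum_mapRange_index (by simp)]
  rfl

lemma mapRange_intCast_mem_supported {ι : Type*} {S : Set ι} {c : ι →₀ ℤ} (hc : ↑c.support ⊆ S) :
    c.mapRange ((↑) : ℤ → ℝ) Int.cast_zero ∈ supported ℝ ℝ S :=
  (mem_supported ℝ _).2 <| (Finset.coe_subset.2 support_mapRange).trans hc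

lemma intCast_apply_eq_of_sum_eq_linearCombination {S : Set V}
    (hS : LinearIndependent ℝ ((↑) : S → V)) {c : V →₀ ℤ} {l : V →₀ ℝ}
    (hc : ↑c.support ⊆ S) (hl : l ∈ supported ℝ ℝ S)
    (h : c.sum (fun v n => (n : ℝ) • v) = linearCombination ℝ id l) (v : V) :
    (c v : ℝ) = l v := by
  rw [sum_intCast_smul_eq_linearCombination] at h
  have hcl := linearIndepOn_iffₛ.1 (linearIndependent_subtype_iff.1 hS) _
    (mapRange_intCast_mem_supported hc) l hl h
  simpa using DFunLike.congr_fun hcl v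

variable {Δ Sg : Set V} {α : V} {s : ℤ}

lemma sub_intCast_smul_mem_rootSub (hSg : IsBase Δ Sg) {β γ : V}
    (hβ : β ∈ rootSub Δ Sg α s) (hγ : γ ∈ rootSub Δ Sg α s) (n : ℤ)
    (hΔ : γ - (n : ℝ) • β ∈ Δ) : γ - (n : ℝ) • β ∈ rootSub Δ Sg α s := by
  refine ⟨hΔ, fun c ⟨hc, hcsum⟩ => ?_⟩
  obtain ⟨cβ, hcβ, hβsum, -⟩ := hSg.2.2 β hβ.1
  obtain ⟨cγ, hcγ, hγsum, -⟩ := hSg.2.2 γ hγ.1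
  have hcoeff : (c α : ℝ) = cγ α - n * cβ α := by
    have := intCast_apply_eq_of_sum_eq_linearCombination hSg.2.1 hc
      (sub_mem (mapRange_intCast_mem_supported hcγ)
        (Submodule.smul_mem _ (n : ℝ) (mapRange_intCast_mem_supported hcβ)))
      (by rw [← hcsum, map_sub, map_smul, ← sum_intCast_smul_eq_linearCombination,
        ← sum_intCast_smul_eq_linearCombination, ← hγsum, ← hβsum]) α
    simpa using this
  rw [show c α = cγ α - n * cβ α by exact_mod_cast hcoeff]
  exact dvd_sub (hγ.2 cγ ⟨hcγ, hγsum⟩) (dvd_mul_of_dvd_right (hβ.2 cβ ⟨hcβ, hβsum⟩) n)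

lemma neg_mem_rootSub (hSg : IsBase Δ Sg) {β : V} (hβ : β ∈ rootSub Δ Sg α s)
    (hΔ : -β ∈ Δ) : -β ∈ rootSub Δ Sg α s := by
  have hneg : β - ((2 : ℤ) : ℝ) • β = -β := by rw [Int.cast_two, two_smul]; abel
  rw [← hneg] at hΔ ⊢
  exact sub_intCast_smul_mem_rootSub hSg hβ hβ 2 hΔ

lemma isRootSystem_rootSub (hΔ : IsRootSystem Δ) (hSg : IsBase Δ Sg) :
    IsRootSystem (rootSub Δ Sg α s) := by
  obtain ⟨hfin, h0, hneg, hrefl⟩ := hΔ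
  refine ⟨hfin.subset fun _ hβ => hβ.1, fun h => h0 h.1,
    fun β hβ => neg_mem_rootSub hSg hβ (hneg β hβ.1), fun β hβ => ?_⟩
  obtain ⟨f, hf2, hfint, hfrefl⟩ := hrefl β hβ.1
  refine ⟨f, hf2, fun γ hγ => hfint γ hγ.1, fun γ hγ => ?_⟩
  obtain ⟨n, hn⟩ := hfint γ hγ.1
  have hγβ := hfrefl γ hγ.1
  rw [hn] at hγβ ⊢
  exact sub_intCast_smul_mem_rootSub hSg hβ hγ n hγβ

lemma mem_rootSub_of_mem_span (hSg : IsBase Δ Sg) {I : Set V} (hI : I ⊆ Sg) (hαI : α ∉ I)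
    {β : V} (hβ : β ∈ Δ) (hspan : β ∈ Submodule.span ℝ I) : β ∈ rootSub Δ Sg α s := by
  refine ⟨hβ, fun c ⟨hc, hcsum⟩ => ?_⟩
  rw [← Set.image_id I] at hspan
  obtain ⟨l, hlI, hl⟩ := (mem_span_image_iff_linearCombination ℝ).1 hspan
  have hcl := intCast_apply_eq_of_sum_eq_linearCombination hSg.2.1 hc
    (supported_mono hI hlI) (hcsum ▸ hl.symm) α
  rw [(mem_supported' ℝ l).1 hlI α hαI, Int.cast_eq_zero] at hcl
  rw [hcl]
  exact dvd_zero s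

theorem stmt18_general (Δ Sg : Set V) (hΔ : IsRootSystem Δ) (hSg : IsBase Δ Sg)
    (α : V) (s : ℤ)
    (I : Set V) (hI : I ⊆ Sg) (hαI : α ∉ I) :
    IsRootSystem (rootSub Δ Sg α s) ∧
      ∀ β ∈ Δ, β ∈ Submodule.span ℝ I → β ∈ rootSub Δ Sg α s :=
  ⟨isRootSystem_rootSub hΔ hSg, fun _ hβ hspan => mem_rootSub_of_mem_span hSg hI hαI hβ hspan⟩

/-- `Δ[α,s]` is a root system, and if `I ⊆ Sg` with `α ∉ I`, every root
lying in the span of `I` belongs to `Δ[α,s]`. -/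
theorem stmt18 (Δ Sg : Set V) (hΔ : IsRootSystem Δ) (hSg : IsBase Δ Sg)
    (α : V) (hα : α ∈ Sg) (s : ℤ) (hs : 0 < s)
    (I : Set V) (hI : I ⊆ Sg) (hαI : α ∉ I) :
    IsRootSystem (rootSub Δ Sg α s) ∧
      ∀ β ∈ Δ, β ∈ Submodule.span ℝ I → β ∈ rootSub Δ Sg α s :=
  stmt18_general Δ Sg hΔ hSg α s I hI hαI
end
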